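/- arXiv:1011.1939 — 2 statements merged into one kernel-verified Lean document; each statement's English description precedes it below -/
import Mathlib

section
/- The Pairwise Partitioning Rule maps a connected N-partition to a connected N-partition: if P is a connected N-partition and regions P_i, P_j are replaced by the two Voronoi-type cells W_{a*}, W_{b*} of U = P_i ∪ P_j determined by a pair (a*, b*) ∈ U × U with a* ≠ b*, then the resulting collection is again a connected N-partition (the two new cells are nonempty, disjoint, cover U, and each induces a connected subgraph). -/
open scoped Classical ENNReal

noncomputable section

variable {V : Type*}

/-- Weighted length of a walk. -/
def wlen (w : V → V → ℝ≥0∞) {G : SimpleGraph V} {u v : V} (p : G.Walk u v) : ℝ≥0∞ :=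
  (p.darts.map fun d => w d.fst d.snd).sum

/-- Shortest weighted path distance in a graph (`⊤` if no path). -/
def gdist (G : SimpleGraph V) (w : V → V → ℝ≥0∞) (u v : V) : ℝ≥0∞ :=
  ⨅ p : G.Walk u v, wlen w p

/-- Distance in the subgraph induced on `A`. -/
def sdist (G : SimpleGraph V) (w : V → V → ℝ≥0∞) (A : Set V) (u v : A) : ℝ≥0∞ :=
  gdist (G.induce A) (fun a b => w a.1 b.1) u v

/-- Distance in the induced subgraph, as a function on `V` (`⊤` off `A`). -/
def dIn (G : SimpleGraph V) (w : V → V → ℝ≥0∞) (A : Set V) (u v : V) : ℝ≥0∞ :=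
  if h : u ∈ A ∧ v ∈ A then sdist G w A ⟨u, h.1⟩ ⟨v, h.2⟩ else ⊤

/-- One-center coverage cost of region `A` from vertex `h`. -/
def HoneV (G : SimpleGraph V) (w : V → V → ℝ≥0∞) (φ : V → ℝ≥0∞) (A : Set V) (h : V) : ℝ≥0∞ :=
  ∑ᶠ k ∈ A, dIn G w A h k * φ k

/-- Set of minimizers of the one-center cost over `A`. -/
def centerSet (G : SimpleGraph V) (w : V → V → ℝ≥0∞) (φ : V → ℝ≥0∞) (A : Set V) : Set V :=
  {h | h ∈ A ∧ ∀ k ∈ A, HoneV G w φ A h ≤ HoneV G w φ A k}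

/-- Generalized centroid: least element of the argmin set. -/
def Cd [Fintype V] [LinearOrder V] [Nonempty V] (G : SimpleGraph V) (w : V → V → ℝ≥0∞)
    (φ : V → ℝ≥0∞) (A : Set V) : V :=
  if hne : (centerSet G w φ A).toFinset.Nonempty then (centerSet G w φ A).toFinset.min' hne
  else Classical.arbitrary V

/-!
The only substantial point is that the two cells induce connected subgraphs. If `y` lies on a
shortest `x`–`a*` path in `U`, then `d(x,y) + d(y,a*) = d(x,a*)`; so `d(y,b*) < d(y,a*)` would
give `d(x,b*) < d(x,a*)`. Hence a shortest path from a point of `W_{a*}` to `a*` stays in `W_{a*}`,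
and likewise (with strict inequalities) for `W_{b*}` and `b*`. Shortest paths exist since the graph
is finite, and finite edge weights make the cancellation in `ℝ≥0∞` legitimate. The region `U` is
connected because `P_i`, `P_j` are connected and joined by an edge. The remaining partition
properties are bookkeeping, and the new regions are nonempty because they are connected.
-/

open Function

section UpdatePair

variable {ι α β : Type*} [DecidableEq ι] {i j : ι}

theorem forall_update_update {p : β → Prop} {P : ι → β} {A B : β} (hP : ∀ k, p (P k))
    (hA : p A) (hB : p B) : ∀ k, p (update (update P i A) j B k) := by
  intro k
  rcases eq_or_ne k j with rfl | hkj
  · simpa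
  rcases eq_or_ne k i with rfl | hki
  · simpa [hkj]
  · simpa [hkj, hki] using hP k

variable {P : ι → Set α} {A B : Set α}

theorem iUnion_update_update (hij : i ≠ j) (hAB : A ∪ B = P i ∪ P j) :
    ⋃ k, update (update P i A) j B k = ⋃ k, P k := by
  have hA : A ⊆ P i ∪ P j := hAB ▸ Set.subset_union_left
  have hB : B ⊆ P i ∪ P j := hAB ▸ Set.subset_union_right
  ext x
  simp only [Set.mem_iUnion, update_apply]
  constructor
  · rintro ⟨k, hk⟩
    split_ifs at hk
    · rcases hB hk with h | h <;> exact ⟨_, h⟩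
    · rcases hA hk with h | h <;> exact ⟨_, h⟩
    · exact ⟨k, hk⟩
  · rintro ⟨k, hk⟩
    by_cases hk' : k = i ∨ k = j
    · have hx : x ∈ A ∪ B := hAB ▸ by rcases hk' with rfl | rfl <;> simp [hk]
      rcases hx with h | h
      · exact ⟨i, by simpa [hij]⟩
      · exact ⟨j, by simpa⟩
    · push Not at hk'
      exact ⟨k, by simpa [hk'.1, hk'.2]⟩

theorem pairwise_disjoint_update_update (hP : Pairwise (Disjoint on P)) (hij : i ≠ j)
    (hAB : A ∪ B = P i ∪ P j) (hdisj : Disjoint A B) :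
    Pairwise (Disjoint on update (update P i A) j B) := by
  have hA : A ⊆ P i ∪ P j := hAB ▸ Set.subset_union_left
  have hB : B ⊆ P i ∪ P j := hAB ▸ Set.subset_union_right
  have hU : ∀ l, l ≠ i → l ≠ j → Disjoint (P i ∪ P j) (P l) := fun l hli hlj =>
    Set.disjoint_union_left.2 ⟨hP hli.symm, hP hlj.symm⟩
  intro k l hkl
  simp only [onFun, update_apply]
  split_ifs <;> subst_vars
  all_goals first
    | exact absurd rfl hkl | exact hdisj | exact hdisj.symm | exact hP hkl
    | exact (hU _ ‹_› ‹_›).mono_left hA | exact (hU _ ‹_› ‹_›).mono_left hB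
    | exact ((hU _ ‹_› ‹_›).mono_left hA).symm | exact ((hU _ ‹_› ‹_›).mono_left hB).symm

end UpdatePair

open SimpleGraph

section WeightedDistance

variable {H : SimpleGraph V} {w : V → V → ℝ≥0∞}

@[simp] theorem wlen_nil {u : V} : wlen w (Walk.nil : H.Walk u u) = 0 := by simp [wlen]

@[simp] theorem wlen_cons {u v x : V} (h : H.Adj u v) (p : H.Walk v x) :
    wlen w (Walk.cons h p) = w u v + wlen w p := by
  simp [wlen]

theorem wlen_append {u v x : V} (p : H.Walk u v) (q : H.Walk v x) :
    wlen w (p.append q) = wlen w p + wlen w q := by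
  simp [wlen, Walk.darts_append]

theorem wlen_ne_top (hw : ∀ u v, H.Adj u v → w u v ≠ ⊤) {u v : V} (p : H.Walk u v) :
    wlen w p ≠ ⊤ := by
  induction p with
  | nil => simp
  | cons h q ih => simpa [ENNReal.add_ne_top] using ⟨hw _ _ h, ih⟩

theorem wlen_bypass_le {u v : V} (p : H.Walk u v) : wlen w p.bypass ≤ wlen w p := by
  induction p with
  | nil => simp [Walk.bypass]
  | cons h q ih =>
    rw [Walk.bypass]
    split_ifs with hs
    · calc wlen w (q.bypass.dropUntil _ hs) ≤ wlen w q.bypass := by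
            conv_rhs => rw [← q.bypass.take_spec hs, wlen_append]
            exact le_add_self
        _ ≤ wlen w q := ih
        _ ≤ wlen w (Walk.cons h q) := by rw [wlen_cons]; exact le_add_self
    · simpa using add_le_add_right ih _

theorem gdist_eq_iInf (u v : V) : gdist H w u v = ⨅ p : H.Walk u v, wlen w p := rfl

theorem gdist_le_wlen {u v : V} (p : H.Walk u v) : gdist H w u v ≤ wlen w p := iInf_le _ _

@[simp] theorem gdist_self (u : V) : gdist H w u u = 0 :=
  nonpos_iff_eq_zero.1 (by simpa using gdist_le_wlen (w := w) (Walk.nil : H.Walk u u))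

theorem gdist_triangle (u x v : V) : gdist H w u v ≤ gdist H w u x + gdist H w x v := by
  rw [gdist_eq_iInf u x, ENNReal.iInf_add]
  refine le_iInf fun p => ?_
  rw [gdist_eq_iInf x v, ENNReal.add_iInf]
  exact le_iInf fun q => (gdist_le_wlen (p.append q)).trans_eq (wlen_append p q)

theorem exists_isPath_wlen_eq_gdist [Fintype V] {u v : V} (h : H.Reachable u v) :
    ∃ p : H.Walk u v, p.IsPath ∧ wlen w p = gdist H w u v := by
  have : Nonempty (H.Path u v) := ⟨(Classical.choice h).toPath⟩
  obtain ⟨p, hp⟩ := Finite.exists_min fun p : H.Path u v => wlen w p.1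
  refine ⟨p.1, p.2, le_antisymm (le_iInf fun q => ?_) (gdist_le_wlen _)⟩
  exact (hp q.toPath).trans (wlen_bypass_le q)

theorem gdist_pos [Fintype V] (hw : ∀ u v, H.Adj u v → 0 < w u v) {u v : V} (huv : u ≠ v) :
    0 < gdist H w u v := by
  by_cases h : H.Reachable u v
  · obtain ⟨p, -, hp⟩ := exists_isPath_wlen_eq_gdist (w := w) h
    rw [← hp]
    cases p with
    | nil => exact absurd rfl huv
    | cons hadj q => exact (hw _ _ hadj).trans_le (by simp)
  · have : IsEmpty (H.Walk u v) := ⟨fun p => h ⟨p⟩⟩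
    simp [gdist, iInf_of_empty]

theorem gdist_add_gdist_of_mem_support {x y c : V} {p : H.Walk x c}
    (hp : wlen w p = gdist H w x c) (hy : y ∈ p.support) :
    gdist H w x y + gdist H w y c = gdist H w x c := by
  refine le_antisymm ?_ (gdist_triangle x y c)
  calc gdist H w x y + gdist H w y c
      ≤ wlen w (p.takeUntil y hy) + wlen w (p.dropUntil y hy) :=
        add_le_add (gdist_le_wlen _) (gdist_le_wlen _)
    _ = gdist H w x c := by rw [← wlen_append, p.take_spec hy, hp]

end WeightedDistance

section VoronoiCells

variable {H : SimpleGraph V} {w : V → V → ℝ≥0∞}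

theorem exists_walk_forall_support_gdist_le [Fintype V] (hw : ∀ u v, H.Adj u v → w u v ≠ ⊤)
    {x a b : V} (hx : gdist H w x a ≤ gdist H w x b) (hr : H.Reachable x a) :
    ∃ p : H.Walk x a, ∀ y ∈ p.support, gdist H w y a ≤ gdist H w y b := by
  obtain ⟨p, -, hp⟩ := exists_isPath_wlen_eq_gdist (w := w) hr
  refine ⟨p, fun y hy => not_lt.1 fun hlt => ?_⟩
  have hsplit := gdist_add_gdist_of_mem_support hp hy
  have hxy : gdist H w x y ≠ ⊤ :=
    ne_top_of_le_ne_top (hp ▸ wlen_ne_top hw p) (hsplit ▸ le_self_add)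
  refine (hx.trans (gdist_triangle x y b)).not_gt ?_
  calc gdist H w x y + gdist H w y b < gdist H w x y + gdist H w y a :=
        ENNReal.add_lt_add_left hxy hlt
    _ = gdist H w x a := hsplit

theorem exists_walk_forall_support_gdist_lt [Fintype V] {x a b : V}
    (hx : gdist H w x b < gdist H w x a) (hr : H.Reachable x b) :
    ∃ p : H.Walk x b, ∀ y ∈ p.support, gdist H w y b < gdist H w y a := by
  obtain ⟨p, -, hp⟩ := exists_isPath_wlen_eq_gdist (w := w) hr
  refine ⟨p, fun y hy => not_le.1 fun hle => hx.not_ge ?_⟩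
  calc gdist H w x a ≤ gdist H w x y + gdist H w y a := gdist_triangle x y a
    _ ≤ gdist H w x y + gdist H w y b := add_le_add_right hle _
    _ = gdist H w x b := gdist_add_gdist_of_mem_support hp hy

end VoronoiCells

theorem SimpleGraph.induce_connected_of_forall_walk {G : SimpleGraph V} {U S : Set V}
    (hSU : S ⊆ U) {c : V} (hc : c ∈ S)
    (h : ∀ x (hx : x ∈ S), ∃ p : (G.induce U).Walk ⟨x, hSU hx⟩ ⟨c, hSU hc⟩,
      ∀ y ∈ p.support, (y : V) ∈ S) :
    (G.induce S).Connected := by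
  refine G.induce_connected_of_patches c hc fun {x} hx => ?_
  obtain ⟨p, hp⟩ := h x hx
  let q := p.map (Embedding.induce U).toHom
  refine ⟨{v | v ∈ q.support}, fun v hv => ?_, q.end_mem_support, q.start_mem_support,
    q.connected_induce_support.preconnected _ _⟩
  obtain ⟨y, hy, rfl⟩ := List.mem_map.1 (by rwa [Walk.support_map] at hv)
  exact hp y hy

section InducedDistance

variable {G : SimpleGraph V} {w : V → V → ℝ≥0∞} {U : Set V}

theorem dIn_eq_gdist {x y : V} (hx : x ∈ U) (hy : y ∈ U) :
    dIn G w U x y = gdist (G.induce U) (fun a b => w a.1 b.1) ⟨x, hx⟩ ⟨y, hy⟩ := by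
  rw [dIn, dif_pos ⟨hx, hy⟩, sdist]

theorem induce_setOf_dIn_le_connected [Fintype V] (hw : ∀ u v, G.Adj u v → w u v ≠ ⊤)
    (hU : (G.induce U).Connected) {a b : V} (ha : a ∈ U) (hb : b ∈ U) :
    (G.induce {x | x ∈ U ∧ dIn G w U x a ≤ dIn G w U x b}).Connected := by
  have haS : a ∈ {x | x ∈ U ∧ dIn G w U x a ≤ dIn G w U x b} :=
    ⟨ha, by simp [dIn_eq_gdist ha ha]⟩
  refine induce_connected_of_forall_walk (fun x hx => hx.1) haS fun x ⟨hxU, hx⟩ => ?_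
  rw [dIn_eq_gdist hxU ha, dIn_eq_gdist hxU hb] at hx
  obtain ⟨p, hp⟩ := exists_walk_forall_support_gdist_le (fun u v h => hw u.1 v.1 h) hx
    (hU.preconnected _ _)
  exact ⟨p, fun y hy => ⟨y.2, by rw [dIn_eq_gdist y.2 ha, dIn_eq_gdist y.2 hb]; exact hp y hy⟩⟩

theorem induce_setOf_dIn_lt_connected [Fintype V] (hw : ∀ u v, G.Adj u v → 0 < w u v)
    (hU : (G.induce U).Connected) {a b : V} (ha : a ∈ U) (hb : b ∈ U) (hab : a ≠ b) :
    (G.induce {x | x ∈ U ∧ dIn G w U x b < dIn G w U x a}).Connected := by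
  have hbS : b ∈ {x | x ∈ U ∧ dIn G w U x b < dIn G w U x a} := by
    refine ⟨hb, ?_⟩
    rw [dIn_eq_gdist hb hb, dIn_eq_gdist hb ha, gdist_self]
    exact gdist_pos (fun u v h => hw u.1 v.1 h) fun h => hab (congrArg Subtype.val h).symm
  refine induce_connected_of_forall_walk (fun x hx => hx.1) hbS fun x ⟨hxU, hx⟩ => ?_
  rw [dIn_eq_gdist hxU ha, dIn_eq_gdist hxU hb] at hx
  obtain ⟨p, hp⟩ := exists_walk_forall_support_gdist_lt hx (hU.preconnected _ _)
  exact ⟨p, fun y hy => ⟨y.2, by rw [dIn_eq_gdist y.2 ha, dIn_eq_gdist y.2 hb]; exact hp y hy⟩⟩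

end InducedDistance

theorem stmt7_general [Fintype V] (G : SimpleGraph V)
    (w : V → V → ℝ≥0∞)
    (hpos : ∀ u v, G.Adj u v → 0 < w u v ∧ w u v ≠ ⊤)
    (N : ℕ) (P : Fin N → Set V)
    (hcover : (⋃ i, P i) = Set.univ)
    (hdisj : ∀ i j, i ≠ j → Disjoint (P i) (P j))
    (hconn : ∀ i, (G.induce (P i)).Connected)
    (i j : Fin N) (hij : i ≠ j)
    (hadj : ∃ qi ∈ P i, ∃ qj ∈ P j, G.Adj qi qj)
    (a b : V) (ha : a ∈ P i ∪ P j) (hb : b ∈ P i ∪ P j) (hab : a ≠ b) :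
    let U := P i ∪ P j
    let Wa := {x | x ∈ U ∧ dIn G w U x a ≤ dIn G w U x b}
    let Wb := U \ Wa
    let P' := Function.update (Function.update P i Wa) j Wb
    ((⋃ k, P' k) = Set.univ) ∧
    (∀ k l, k ≠ l → Disjoint (P' k) (P' l)) ∧
    (∀ k, (P' k).Nonempty) ∧
    (∀ k, (G.induce (P' k)).Connected) := by
  intro U Wa Wb P'
  have hU : (G.induce U).Connected :=
    let ⟨_, hqi, _, hqj, hq⟩ := hadj
    connected_induce_union (hconn i).preconnected (hconn j).preconnected hqi hqj hq
  have hsplit : Wa ∪ Wb = P i ∪ P j := Set.union_sdiff_cancel (Set.sep_subset _ _)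
  have hWb : Wb = {x | x ∈ U ∧ dIn G w U x b < dIn G w U x a} := by
    ext x
    simp [Wb, Wa, and_comm]
  have hWa_conn : (G.induce Wa).Connected :=
    induce_setOf_dIn_le_connected (fun u v h => (hpos u v h).2) hU ha hb
  have hWb_conn : (G.induce Wb).Connected :=
    hWb ▸ induce_setOf_dIn_lt_connected (fun u v h => (hpos u v h).1) hU ha hb hab
  have hconn' : ∀ k, (G.induce (P' k)).Connected :=
    forall_update_update (p := fun s => (G.induce s).Connected) hconn hWa_conn hWb_conn
  exact ⟨(iUnion_update_update hij hsplit).trans hcover,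
    pairwise_disjoint_update_update hdisj hij hsplit Set.disjoint_sdiff_right,
    fun k => Set.nonempty_coe_sort.1 (hconn' k).nonempty, hconn'⟩

/-- The Pairwise Partitioning Rule maps a connected N-partition to a connected
N-partition. -/
theorem stmt7 [Fintype V] (G : SimpleGraph V) (hG : G.Connected)
    (w : V → V → ℝ≥0∞) (hsym : ∀ u v, w u v = w v u)
    (hpos : ∀ u v, G.Adj u v → 0 < w u v ∧ w u v ≠ ⊤)
    (N : ℕ) (P : Fin N → Set V)
    (hcover : (⋃ i, P i) = Set.univ)
    (hdisj : ∀ i j, i ≠ j → Disjoint (P i) (P j))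
    (hne : ∀ i, (P i).Nonempty)
    (hconn : ∀ i, (G.induce (P i)).Connected)
    (i j : Fin N) (hij : i ≠ j)
    (hadj : ∃ qi ∈ P i, ∃ qj ∈ P j, G.Adj qi qj)
    (a b : V) (ha : a ∈ P i ∪ P j) (hb : b ∈ P i ∪ P j) (hab : a ≠ b) :
    let U := P i ∪ P j
    let Wa := {x | x ∈ U ∧ dIn G w U x a ≤ dIn G w U x b}
    let Wb := U \ Wa
    let P' := Function.update (Function.update P i Wa) j Wb
    ((⋃ k, P' k) = Set.univ) ∧
    (∀ k l, k ≠ l → Disjoint (P' k) (P' l)) ∧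
    (∀ k, (P' k).Nonempty) ∧
    (∀ k, (G.induce (P' k)).Connected) :=
  stmt7_general G w hpos N P hcover hdisj hconn i j hij hadj a b ha hb hab
end
end

section
/- Persistent random switches imply finite-time convergence: let X be a finite set, T_1,...,T_m : X → X maps, W ⊆ X strongly positively invariant for all T_i, and U : W → ℝ a function with U(T_i(w)) < U(w) whenever T_i(w) ≠ w. Let σ : ℕ → {1,...,m} be a stochastic process such that there exist p ∈ (0,1) and k ∈ ℕ with: for all i and n there exists h ∈ {1,...,k} such that P[σ(n+h) = i | σ(n),...,σ(1)] ≥ p. Then the evolution x_{n+1} = T_{σ(n)}(x_n) with x_0 ∈ W almost surely reaches, in finite time, a point x̄ that is a common fixed point of all T_i, and stays there forever. -/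
open scoped Classical ENNReal

noncomputable section

variable {V : Type*}

/-!
Whatever the past up to time `n`, each switch `i` has conditional probability at least `p`
of being used at some later time `n + h`. Probing for `i` at successive such times therefore
multiplies the probability of never seeing it by `1 - p` each time, so almost surely every
switch occurs infinitely often. Along any trajectory in `W` the function `U` decreases
strictly at every move, and `X` is finite, so the trajectory is eventually constant at some
`x̄`; since every `T i` is applied to `x̄` later on, `x̄` is a common fixed point.
-/

open MeasureTheory Filter Topology

section Descent

variable {X ι β : Type*}

theorem exists_forall_ge_eq_of_lt_of_ne [Finite X] [LinearOrder β]
    (U : X → β) (r : ℕ → X) (hr : ∀ n, r (n + 1) ≠ r n → U (r (n + 1)) < U (r n)) :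
    ∃ τ, ∀ n ≥ τ, r n = r τ := by
  obtain ⟨_, ⟨τ, rfl⟩, hτ⟩ :=
    Set.exists_min_image (Set.range r) U (Set.toFinite _) (Set.range_nonempty r)
  refine ⟨τ, fun n hn => ?_⟩
  induction n, hn using Nat.le_induction with
  | base => rfl
  | succ n _ ih =>
    by_contra hne
    exact (hτ _ ⟨n + 1, rfl⟩).not_gt (ih ▸ hr n (by rwa [ih]))

theorem apply_eq_of_frequently_eq {T : ι → X → X} {s : ℕ → ι} {x : ℕ → X}
    (hx : ∀ n, x (n + 1) = T (s n) (x n)) {τ : ℕ} (hτ : ∀ n ≥ τ, x n = x τ) {i : ι}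
    (hi : ∃ᶠ n in atTop, s n = i) : T i (x τ) = x τ := by
  obtain ⟨n, hn, rfl⟩ := hi.forall_exists_of_atTop τ
  rw [← hτ n hn, ← hx, hτ n hn, hτ (n + 1) (by omega)]

theorem exists_common_fixedPt_of_frequently [Finite X] [LinearOrder β]
    (T : ι → X → X) {W : Set X} (hW : ∀ i, ∀ x ∈ W, T i x ∈ W)
    (U : X → β) (hU : ∀ i, ∀ x ∈ W, T i x ≠ x → U (T i x) < U x)
    {s : ℕ → ι} (hs : ∀ i, ∃ᶠ n in atTop, s n = i)
    {x : ℕ → X} (hx0 : x 0 ∈ W) (hx : ∀ n, x (n + 1) = T (s n) (x n)) :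
    ∃ τ, ∃ xb ∈ W, (∀ i, T i xb = xb) ∧ ∀ n ≥ τ, x n = xb := by
  have hxW : ∀ n, x n ∈ W := fun n => by
    induction n with
    | zero => exact hx0
    | succ n ih => exact hx n ▸ hW _ _ ih
  obtain ⟨τ, hτ⟩ := exists_forall_ge_eq_of_lt_of_ne U x fun n hne => by
    rw [hx] at hne ⊢
    exact hU _ _ (hxW n) hne
  exact ⟨τ, x τ, hxW τ, fun i => apply_eq_of_frequently_eq hx hτ (hs i), hτ⟩

end Descent

section History

variable {Ω α : Type*} {σ : ℕ → Ω → α}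

def DeterminedByHistory (σ : ℕ → Ω → α) (n : ℕ) (A : Set Ω) : Prop :=
  ∀ ω ω', (∀ j, 1 ≤ j → j ≤ n → σ j ω = σ j ω') → (ω ∈ A ↔ ω' ∈ A)

theorem DeterminedByHistory.eq_setOf {n : ℕ} {A : Set Ω} (hA : DeterminedByHistory σ n A) :
    A = {ω | ∃ ω' ∈ A, ∀ t : Fin n, σ (t + 1) ω' = σ (t + 1) ω} := by
  ext ω
  refine ⟨fun hω => ⟨ω, hω, fun _ => rfl⟩, fun ⟨ω', hω', hagree⟩ => ?_⟩
  refine (hA ω' ω fun j hj hjn => ?_).mp hω'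
  obtain ⟨t, rfl⟩ : ∃ t, j = t + 1 := ⟨j - 1, by omega⟩
  exact hagree ⟨t, by omega⟩

variable [MeasurableSpace Ω] [MeasurableSpace α] [MeasurableSingletonClass α] {μ : Measure Ω}

theorem measurableSet_cylinder (hσ : ∀ n, Measurable (σ n)) (n : ℕ) (s : Fin n → α) :
    MeasurableSet {ω | ∀ t : Fin n, σ (t + 1) ω = s t} := by
  simp only [Set.ofPred_forall]
  exact .iInter fun t => hσ _ (measurableSet_singleton _)

variable [Fintype α]

theorem measure_inter_eq_sum_cylinder (hσ : ∀ n, Measurable (σ n)) (n : ℕ)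
    (Q : (Fin n → α) → Prop) {E : Set Ω} (hE : MeasurableSet E) :
    μ (E ∩ {ω | Q fun t : Fin n => σ (t + 1) ω}) =
      ∑ s with Q s, μ (E ∩ {ω | ∀ t : Fin n, σ (t + 1) ω = s t}) := by
  rw [← measure_biUnion_finset]
  · congr 1
    ext ω
    simp only [Set.mem_iUnion, Finset.mem_filter, Finset.mem_univ, true_and,
      Set.mem_inter_iff, Set.mem_ofPred_eq, exists_prop]
    constructor
    · rintro ⟨hE, hQ⟩
      exact ⟨_, hQ, hE, fun _ => rfl⟩
    · rintro ⟨s, hQ, hE, hs⟩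
      exact ⟨hE, funext hs ▸ hQ⟩
  · intro s _ s' _ hne
    simp only [Function.onFun, Set.disjoint_left]
    rintro ω ⟨-, h⟩ ⟨-, h'⟩
    exact hne (funext fun t => (h t).symm.trans (h' t))
  · exact fun s _ => hE.inter (measurableSet_cylinder hσ n s)

theorem mul_measure_le_measure_inter (hσ : ∀ n, Measurable (σ n)) {p : ℝ≥0∞} {n h : ℕ}
    {i : α} (hP : ∀ s : Fin n → α, p * μ {ω | ∀ t : Fin n, σ (t + 1) ω = s t} ≤
      μ ({ω | σ (n + h) ω = i} ∩ {ω | ∀ t : Fin n, σ (t + 1) ω = s t}))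
    {A : Set Ω} (hA : DeterminedByHistory σ n A) :
    p * μ A ≤ μ ({ω | σ (n + h) ω = i} ∩ A) := by
  set Q : (Fin n → α) → Prop := fun s => ∃ ω' ∈ A, ∀ t : Fin n, σ (t + 1) ω' = s t
  have hAQ : A = {ω | Q fun t : Fin n => σ (t + 1) ω} := hA.eq_setOf
  have hall := measure_inter_eq_sum_cylinder (μ := μ) hσ n Q MeasurableSet.univ
  simp only [Set.univ_inter] at hall
  have hE : MeasurableSet {ω | σ (n + h) ω = i} := hσ _ (measurableSet_singleton i)
  rw [hAQ, hall, measure_inter_eq_sum_cylinder hσ n Q hE, Finset.mul_sum]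
  exact Finset.sum_le_sum fun s _ => hP s

theorem measure_inter_ne_le [IsFiniteMeasure μ] (hσ : ∀ n, Measurable (σ n))
    {p : ℝ≥0∞} {n h : ℕ} {i : α}
    (hP : ∀ s : Fin n → α, p * μ {ω | ∀ t : Fin n, σ (t + 1) ω = s t} ≤
      μ ({ω | σ (n + h) ω = i} ∩ {ω | ∀ t : Fin n, σ (t + 1) ω = s t}))
    {A : Set Ω} (hA : DeterminedByHistory σ n A) :
    μ (A ∩ {ω | σ (n + h) ω ≠ i}) ≤ (1 - p) * μ A := by
  have hE : MeasurableSet {ω | σ (n + h) ω = i} := hσ _ (measurableSet_singleton i)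
  have hsplit := measure_inter_add_sdiff (μ := μ) A hE
  calc μ (A ∩ {ω | σ (n + h) ω ≠ i})
      = μ A - μ ({ω | σ (n + h) ω = i} ∩ A) := by
        rw [Set.inter_comm {ω | σ (n + h) ω = i}]
        exact ENNReal.eq_sub_of_add_eq (measure_ne_top μ _) ((add_comm _ _).trans hsplit)
    _ ≤ μ A - p * μ A := tsub_le_tsub_left (mul_measure_le_measure_inter hσ hP hA) _
    _ = (1 - p) * μ A := by rw [ENNReal.sub_mul fun _ _ => measure_ne_top μ _, one_mul]

end History

section Persistence

def probeTime (N : ℕ) (f : ℕ → ℕ) : ℕ → ℕ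
  | 0 => N
  | r + 1 => probeTime N f r + f (probeTime N f r)

theorem monotone_probeTime (N : ℕ) (f : ℕ → ℕ) : Monotone (probeTime N f) :=
  monotone_nat_of_le_succ fun _ => Nat.le_add_right _ _

theorem lt_probeTime_succ {f : ℕ → ℕ} (hf : ∀ n, 1 ≤ f n) (N r : ℕ) :
    N < probeTime N f (r + 1) :=
  (monotone_probeTime N f (Nat.zero_le r)).trans_lt (Nat.lt_add_of_pos_right (hf _))

variable {Ω α : Type*} [MeasurableSpace Ω] [MeasurableSpace α] [MeasurableSingletonClass α]
  [Fintype α] {μ : Measure Ω} [IsProbabilityMeasure μ] {σ : ℕ → Ω → α}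

theorem measure_forall_ge_ne_eq_zero (hσ : ∀ n, Measurable (σ n)) {p : ℝ≥0∞} (hp : 0 < p)
    (i : α) (hpers : ∀ n : ℕ, ∃ h, 1 ≤ h ∧ ∀ s : Fin n → α,
      p * μ {ω | ∀ t : Fin n, σ (t + 1) ω = s t} ≤
        μ ({ω | σ (n + h) ω = i} ∩ {ω | ∀ t : Fin n, σ (t + 1) ω = s t}))
    (N : ℕ) : μ {ω | ∀ n ≥ N, σ n ω ≠ i} = 0 := by
  choose f hf hfP using hpers
  set t := probeTime N f
  set B : ℕ → Set Ω := fun r => {ω | ∀ s < r, σ (t (s + 1)) ω ≠ i}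
  have hB_det : ∀ r, DeterminedByHistory σ (t r) (B r) := fun r ω ω' hagree =>
    forall₂_congr fun s hs => by
      rw [hagree _ ((Nat.zero_le N).trans_lt (lt_probeTime_succ hf N s))
        (monotone_probeTime N f hs)]
  have hB_succ : ∀ r, μ (B (r + 1)) ≤ (1 - p) * μ (B r) := fun r => by
    have : B (r + 1) = B r ∩ {ω | σ (t r + f (t r)) ω ≠ i} := by
      ext ω
      exact Nat.forall_lt_succ_right
    exact this ▸ measure_inter_ne_le hσ (hfP _) (hB_det r)
  have hB_le : ∀ r, μ (B r) ≤ (1 - p) ^ r := fun r => by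
    induction r with
    | zero => simp [prob_le_one]
    | succ r ih => exact (hB_succ r).trans (by rw [pow_succ']; gcongr)
  have hsub : ∀ r, {ω | ∀ n ≥ N, σ n ω ≠ i} ⊆ B r :=
    fun r ω hω s _ => hω _ (lt_probeTime_succ hf N s).le
  have hlim : Tendsto (fun r => (1 - p) ^ r) atTop (𝓝 0) :=
    ENNReal.tendsto_pow_atTop_nhds_zero_of_lt_one
      (ENNReal.sub_lt_self ENNReal.one_ne_top one_ne_zero hp.ne')
  exact le_antisymm
    (ge_of_tendsto' hlim fun r => (measure_mono (hsub r)).trans (hB_le r)) zero_le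

theorem ae_forall_frequently_eq (hσ : ∀ n, Measurable (σ n)) {p : ℝ≥0∞} (hp : 0 < p)
    (hpers : ∀ (i : α) (n : ℕ), ∃ h, 1 ≤ h ∧ ∀ s : Fin n → α,
      p * μ {ω | ∀ t : Fin n, σ (t + 1) ω = s t} ≤
        μ ({ω | σ (n + h) ω = i} ∩ {ω | ∀ t : Fin n, σ (t + 1) ω = s t})) :
    ∀ᵐ ω ∂μ, ∀ i, ∃ᶠ n in atTop, σ n ω = i := by
  refine ae_all_iff.mpr fun i => ae_iff.mpr ?_
  simp only [not_frequently, eventually_atTop, Set.ofPred_exists]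
  exact measure_iUnion_null (measure_forall_ge_ne_eq_zero hσ hp i (hpers i))

end Persistence

open MeasureTheory in
theorem stmt11_general {X : Type*} [Finite X] {m : ℕ} (T : Fin m → X → X) (W : Set X)
    (hW : ∀ i, ∀ x ∈ W, T i x ∈ W)
    (U : X → ℝ) (hU : ∀ i, ∀ x ∈ W, T i x ≠ x → U (T i x) < U x)
    {Ω : Type*} [MeasurableSpace Ω] (μ : Measure Ω) [IsProbabilityMeasure μ]
    (σ : ℕ → Ω → Fin m) (hmeas : ∀ n, Measurable (σ n))
    (p : ℝ≥0∞) (hp0 : 0 < p) (k : ℕ)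
    (hpers : ∀ (i : Fin m) (n : ℕ), ∃ h, 1 ≤ h ∧ h ≤ k ∧
      ∀ s : Fin n → Fin m,
        p * μ {ω | ∀ t : Fin n, σ ((t : ℕ) + 1) ω = s t} ≤
          μ ({ω | σ (n + h) ω = i} ∩ {ω | ∀ t : Fin n, σ ((t : ℕ) + 1) ω = s t}))
    (x0 : X) (hx0 : x0 ∈ W)
    (x : ℕ → Ω → X) (hxinit : ∀ ω, x 0 ω = x0)
    (hxstep : ∀ n ω, x (n + 1) ω = T (σ n ω) (x n ω)) :
    μ {ω | ∃ τ : ℕ, ∃ xb ∈ W, (∀ i, T i xb = xb) ∧ ∀ n ≥ τ, x n ω = xb} = 1 := by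
  have hfreq : ∀ᵐ ω ∂μ, ∀ i, ∃ᶠ n in atTop, σ n ω = i :=
    ae_forall_frequently_eq hmeas hp0 fun i n => (hpers i n).imp fun _ h => ⟨h.1, h.2.2⟩
  have hconv :
      ∀ᵐ ω ∂μ, ∃ τ : ℕ, ∃ xb ∈ W, (∀ i, T i xb = xb) ∧ ∀ n ≥ τ, x n ω = xb := by
    filter_upwards [hfreq] with ω hω
    exact exists_common_fixedPt_of_frequently T hW U hU hω ((hxinit ω).symm ▸ hx0)
      (fun n => hxstep n ω)
  exact (measure_congr (ae_eq_univ.mpr (ae_iff.mp hconv))).trans measure_univ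

open MeasureTheory in
/-- Persistent random switches imply almost-sure finite-time convergence to a
common fixed point. -/
theorem stmt11 {X : Type*} [Finite X] {m : ℕ} (T : Fin m → X → X) (W : Set X)
    (hW : ∀ i, ∀ x ∈ W, T i x ∈ W)
    (U : X → ℝ) (hU : ∀ i, ∀ x ∈ W, T i x ≠ x → U (T i x) < U x)
    {Ω : Type*} [MeasurableSpace Ω] (μ : Measure Ω) [IsProbabilityMeasure μ]
    (σ : ℕ → Ω → Fin m) (hmeas : ∀ n, Measurable (σ n))
    (p : ℝ≥0∞) (hp0 : 0 < p) (hp1 : p < 1) (k : ℕ) (hk : 0 < k)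
    (hpers : ∀ (i : Fin m) (n : ℕ), ∃ h, 1 ≤ h ∧ h ≤ k ∧
      ∀ s : Fin n → Fin m,
        p * μ {ω | ∀ t : Fin n, σ ((t : ℕ) + 1) ω = s t} ≤
          μ ({ω | σ (n + h) ω = i} ∩ {ω | ∀ t : Fin n, σ ((t : ℕ) + 1) ω = s t}))
    (x0 : X) (hx0 : x0 ∈ W)
    (x : ℕ → Ω → X) (hxinit : ∀ ω, x 0 ω = x0)
    (hxstep : ∀ n ω, x (n + 1) ω = T (σ n ω) (x n ω)) :
    μ {ω | ∃ τ : ℕ, ∃ xb ∈ W, (∀ i, T i xb = xb) ∧ ∀ n ≥ τ, x n ω = xb} = 1 :=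
  stmt11_general T W hW U hU μ σ hmeas p hp0 k hpers x0 hx0 x hxinit hxstep
end
end
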